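/- Let m, n, d be positive integers with m ≤ n-1, and let r be an integer with dm ≡ -r (mod n). Then for all k with 0 ≤ k ≤ m, one has the congruence of rational functions in a and q: (aq^r; q^d)_{m-k} / (q^d/a; q^d)_{m-k} ≡ (-a)^{m-2k} * (aq^r; q^d)_k / (q^d/a; q^d)_k * q^{m(dm-d+2r)/2 + (d-r)k} modulo Φ_n(q), where the congruence means the numerator of the difference, as a polynomial in q with coefficients rational functions in a, is divisible by the n-th cyclotomic polynomial Φ_n(q). -/

import Mathlib

open Finset Polynomial

/-- The coefficient field `ℚ(a)`. -/
noncomputable abbrev K : Type := RatFunc ℚ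

/-- The field `ℚ(a)(q)` of rational functions in `a` and `q`. -/
noncomputable abbrev F : Type := RatFunc K

/-- The indeterminate `a`. -/
noncomputable def a : F := RatFunc.C RatFunc.X

/-- The indeterminate `q`. -/
noncomputable def q : F := RatFunc.X

/-- The `q`-shifted factorial `(x; Q)_k = (1-x)(1-xQ)⋯(1-xQ^{k-1})`. -/
noncomputable def qPoch (x Q : F) (k : ℕ) : F :=
  ∏ i ∈ Finset.range k, (1 - x * Q ^ i)

namespace GS

noncomputable def ι : Polynomial K →+* F := (algebraMap (Polynomial K) F : _)

lemma q_ne_zero : q ≠ 0 := RatFunc.X_ne_zero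

lemma a_eq : a = RatFunc.C (RatFunc.X : K) := rfl

lemma a_ne_zero : a ≠ 0 := by
  rw [a_eq]
  simpa using RatFunc.X_ne_zero (K := ℚ)

lemma neg_a_ne_zero : (-a) ≠ 0 := neg_ne_zero.mpr a_ne_zero

lemma ι_X_pow (s : ℕ) : ι (X ^ s) = q ^ s := by
  rw [ι, map_pow, RatFunc.algebraMap_X]; rfl

lemma ι_C (c : K) : ι (Polynomial.C c) = RatFunc.C c := RatFunc.algebraMap_C c

/-- `x` is a Laurent polynomial in `q`. -/
def Nice (x : F) : Prop := ∃ (p : Polynomial K) (t : ℕ), x * q ^ t = ι p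

lemma Nice.map (p : Polynomial K) : Nice (ι p) := ⟨p, 0, by simp⟩

lemma nice_C (c : K) : Nice (RatFunc.C c) := ⟨Polynomial.C c, 0, by simp [ι_C]⟩

lemma nice_one : Nice (1 : F) := ⟨1, 0, by simp⟩

lemma nice_zero : Nice (0 : F) := ⟨0, 0, by simp⟩

lemma Nice.mul {x y : F} (hx : Nice x) (hy : Nice y) : Nice (x * y) := by
  obtain ⟨p, t, hp⟩ := hx; obtain ⟨p', t', hp'⟩ := hy
  exact ⟨p * p', t + t', by rw [pow_add, map_mul, ← hp, ← hp']; ring⟩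

lemma Nice.add {x y : F} (hx : Nice x) (hy : Nice y) : Nice (x + y) := by
  obtain ⟨p, t, hp⟩ := hx; obtain ⟨p', t', hp'⟩ := hy
  refine ⟨p * X ^ t' + p' * X ^ t, t + t', ?_⟩
  rw [map_add, map_mul, map_mul, ι_X_pow, ι_X_pow, ← hp, ← hp', pow_add]; ring

lemma Nice.neg {x : F} (hx : Nice x) : Nice (-x) := by
  obtain ⟨p, t, hp⟩ := hx
  exact ⟨-p, t, by rw [map_neg, ← hp]; ring⟩

lemma Nice.sub {x y : F} (hx : Nice x) (hy : Nice y) : Nice (x - y) := by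
  rw [sub_eq_add_neg]; exact hx.add hy.neg

lemma Nice.pow {x : F} (hx : Nice x) (s : ℕ) : Nice (x ^ s) := by
  induction s with
  | zero => simpa using nice_one
  | succ t ih => rw [pow_succ]; exact ih.mul hx

lemma nice_q_zpow (z : ℤ) : Nice (q ^ z) := by
  rcases le_or_gt 0 z with h | h
  · refine ⟨X ^ z.toNat, 0, ?_⟩
    rw [pow_zero, mul_one, ι_X_pow, ← zpow_natCast, Int.toNat_of_nonneg h]
  · refine ⟨1, (-z).toNat, ?_⟩
    rw [map_one, ← zpow_natCast q, Int.toNat_of_nonneg (by omega : (0:ℤ) ≤ -z),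
      ← zpow_add₀ q_ne_zero]
    simp

lemma nice_q_npow (s : ℕ) : Nice (q ^ s) := ⟨X ^ s, 0, by simp [ι_X_pow]⟩

lemma nice_a : Nice a := nice_C _

lemma nice_neg_a_zpow (z : ℤ) : Nice ((-a) ^ z) := by
  have : (-a) ^ z = RatFunc.C ((-(RatFunc.X : K)) ^ z) := by
    rw [map_zpow₀, map_neg, ← a_eq]
  rw [this]; exact nice_C _

lemma Nice.prod {s : Finset ℕ} {f : ℕ → F} (h : ∀ i ∈ s, Nice (f i)) :
    Nice (∏ i ∈ s, f i) := by
  classical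
  induction s using Finset.induction with
  | empty => simpa using nice_one
  | insert _ _ hx ih =>
    rw [Finset.prod_insert hx]
    exact (h _ (Finset.mem_insert_self _ _)).mul
      (ih fun i hi => h i (Finset.mem_insert_of_mem hi))

/-- Congruence modulo the cyclotomic polynomial. -/
def Cong (n : ℕ) (x y : F) : Prop := ∃ z : F, Nice z ∧ x - y = ι (cyclotomic n K) * z

lemma Cong.refl (n : ℕ) (x : F) : Cong n x x := ⟨0, nice_zero, by ring⟩

lemma Cong.symm {n : ℕ} {x y : F} (h : Cong n x y) : Cong n y x := by
  obtain ⟨z, hz, h⟩ := h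
  exact ⟨-z, hz.neg, by rw [mul_neg, ← h]; ring⟩

lemma Cong.trans {n : ℕ} {x y w : F} (h : Cong n x y) (h' : Cong n y w) : Cong n x w := by
  obtain ⟨z, hz, h⟩ := h; obtain ⟨z', hz', h'⟩ := h'
  exact ⟨z + z', hz.add hz', by rw [mul_add, ← h, ← h']; ring⟩

lemma Cong.congr {n : ℕ} {x y x' y' : F} (h : Cong n x y) (hx : x = x') (hy : y = y') :
    Cong n x' y' := hx ▸ hy ▸ h

lemma Cong.mul {n : ℕ} {x₁ y₁ x₂ y₂ : F} (h₁ : Cong n x₁ y₁) (h₂ : Cong n x₂ y₂)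
    (hx₂ : Nice x₂) (hy₁ : Nice y₁) : Cong n (x₁ * x₂) (y₁ * y₂) := by
  obtain ⟨z₁, hz₁, h₁⟩ := h₁; obtain ⟨z₂, hz₂, h₂⟩ := h₂
  refine ⟨z₁ * x₂ + y₁ * z₂, (hz₁.mul hx₂).add (hy₁.mul hz₂), ?_⟩
  have : x₁ * x₂ - y₁ * y₂ = (x₁ - y₁) * x₂ + y₁ * (x₂ - y₂) := by ring
  rw [this, h₁, h₂]; ring

lemma Cong.mul_left {n : ℕ} (c : F) (hc : Nice c) {x y : F} (h : Cong n x y) :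
    Cong n (c * x) (c * y) := by
  obtain ⟨z, hz, h⟩ := h
  exact ⟨c * z, hc.mul hz, by rw [← mul_sub, h]; ring⟩

lemma Cong.one_sub {n : ℕ} {x y : F} (h : Cong n x y) : Cong n (1 - x) (1 - y) := by
  obtain ⟨z, hz, h⟩ := h
  exact ⟨-z, hz.neg, by rw [mul_neg, ← h]; ring⟩

lemma cong_q_mul_one {n : ℕ} (e : ℤ) : Cong n (q ^ ((n : ℤ) * e)) 1 := by
  have key : ∀ c : ℕ, Cong n (q ^ ((n * c : ℕ) : ℤ)) 1 := by
    intro c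
    obtain ⟨g, hg⟩ : cyclotomic n K ∣ X ^ (n * c) - 1 :=
      (cyclotomic.dvd_X_pow_sub_one n K).trans
        (by rw [pow_mul]; simpa using sub_dvd_pow_sub_pow (X ^ n : Polynomial K) 1 c)
    refine ⟨ι g, Nice.map g, ?_⟩
    rw [zpow_natCast, ← ι_X_pow, ← map_mul, ← hg, map_sub, map_one, ι_X_pow]
  rcases le_or_gt 0 e with h | h
  · have : (n : ℤ) * e = ((n * e.toNat : ℕ) : ℤ) := by push_cast; rw [Int.toNat_of_nonneg h]
    rw [this]; exact key _
  · obtain ⟨z, hz, h1⟩ := key (-e).toNat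
    refine ⟨-(q ^ ((n : ℤ) * e)) * z, ((nice_q_zpow _).neg).mul hz, ?_⟩
    have hq : q ^ ((n : ℤ) * e) * q ^ (((n * (-e).toNat : ℕ)) : ℤ) = 1 := by
      rw [← zpow_add₀ q_ne_zero]
      have : (n : ℤ) * e + ((n * (-e).toNat : ℕ) : ℤ) = 0 := by
        push_cast
        rw [Int.toNat_of_nonneg (by omega : (0:ℤ) ≤ -e)]
        ring
      rw [this, zpow_zero]
    have expand : q ^ ((n : ℤ) * e) - 1 =
        -(q ^ ((n : ℤ) * e)) * (q ^ (((n * (-e).toNat : ℕ)) : ℤ) - 1) := by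
      rw [neg_mul, mul_sub, mul_one, hq]; ring
    rw [expand, h1]; ring

lemma cong_q_zpow {n : ℕ} {z z' : ℤ} (h : (n : ℤ) ∣ z - z') : Cong n (q ^ z) (q ^ z') := by
  obtain ⟨e, he⟩ := h
  have := (cong_q_mul_one (n := n) e).mul_left (q ^ z') (nice_q_zpow _)
  refine this.congr ?_ (by rw [mul_one])
  rw [← zpow_add₀ q_ne_zero]
  congr 1; omega

/-! ### Coprimality -/

lemma isCoprime_of_no_common_root {p s : Polynomial K} (hp : p ≠ 0)
    (h : ∀ z : AlgebraicClosure K, aeval z p = 0 → aeval z s ≠ 0) : IsCoprime p s := by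
  classical
  rw [← EuclideanDomain.gcd_isUnit_iff]
  by_contra hu
  have hg0 : EuclideanDomain.gcd p s ≠ 0 := fun h0 => hp (EuclideanDomain.gcd_eq_zero_iff.mp h0).1
  have hdeg : (EuclideanDomain.gcd p s).degree ≠ 0 := fun hdeg =>
    hu (Polynomial.isUnit_iff_degree_eq_zero.mpr hdeg)
  obtain ⟨z, hz⟩ := IsAlgClosed.exists_aeval_eq_zero (AlgebraicClosure K) _ hdeg
  have hzp : aeval z p = 0 := by
    obtain ⟨c, hc⟩ := EuclideanDomain.gcd_dvd_left p s
    rw [hc, map_mul, hz, zero_mul]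
  have hzs : aeval z s = 0 := by
    obtain ⟨c, hc⟩ := EuclideanDomain.gcd_dvd_right p s
    rw [hc, map_mul, hz, zero_mul]
  exact h z hzp hzs

lemma aK_pow_ne_one {n : ℕ} (hn : 0 < n) : (RatFunc.X : K) ^ n ≠ 1 := by
  intro h
  have h2 : (algebraMap (Polynomial ℚ) K) (X ^ n) = (algebraMap (Polynomial ℚ) K) 1 := by
    rw [map_pow, RatFunc.algebraMap_X, h, map_one]
  have h3 := RatFunc.algebraMap_injective ℚ h2
  have := congrArg Polynomial.natDegree h3
  simp at this
  omega

lemma root_cyclo_pow {n : ℕ} {z : AlgebraicClosure K} (hz : aeval z (cyclotomic n K) = 0) :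
    z ^ n = 1 := by
  obtain ⟨c, hc⟩ := cyclotomic.dvd_X_pow_sub_one n K
  have : aeval z ((X : Polynomial K) ^ n - 1) = 0 := by rw [hc, map_mul, hz, zero_mul]
  simpa [sub_eq_zero] using this

lemma coprime_cyclo_X {n : ℕ} (hn : 0 < n) : IsCoprime (cyclotomic n K) (X : Polynomial K) := by
  refine isCoprime_of_no_common_root (cyclotomic_ne_zero n K) fun z hz hz' => ?_
  have h1 := root_cyclo_pow hz
  simp only [aeval_X] at hz'
  rw [hz', zero_pow hn.ne'] at h1
  exact zero_ne_one h1

lemma coprime_cyclo_factor {n : ℕ} (hn : 0 < n) {e : ℕ} (he : 0 < e) :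
    IsCoprime (cyclotomic n K) (1 - Polynomial.C ((RatFunc.X : K)⁻¹) * X ^ e) := by
  refine isCoprime_of_no_common_root (cyclotomic_ne_zero n K) fun z hz hz' => ?_
  have h1 := root_cyclo_pow hz
  simp only [map_sub, map_one, map_mul, aeval_C, map_pow, aeval_X, sub_eq_zero] at hz'
  set ι₀ := algebraMap K (AlgebraicClosure K)
  have ha0 : (RatFunc.X : K) ≠ 0 := RatFunc.X_ne_zero
  have hι : ι₀ (RatFunc.X : K) ≠ 0 := (map_ne_zero ι₀).mpr ha0
  have h2 : ι₀ (RatFunc.X : K) = z ^ e := by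
    rw [map_inv₀] at hz'
    field_simp [hι] at hz'
    linear_combination hz'
  have h3 : ι₀ ((RatFunc.X : K) ^ n) = 1 := by
    rw [map_pow, h2, ← pow_mul, mul_comm e n, pow_mul, h1, one_pow]
  have h4 : (RatFunc.X : K) ^ n = 1 :=
    ι₀.injective (by rw [h3, map_one] : ι₀ ((RatFunc.X : K) ^ n) = ι₀ 1)
  exact aK_pow_ne_one hn h4

/-! ### Integer arithmetic -/

lemma sum_lin (M : ℤ) (t : ℕ) :
    2 * ∑ j ∈ range t, (M - (j : ℤ)) = 2 * t * M - t * (t - 1) := by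
  induction t with
  | zero => simp
  | succ s ih => rw [Finset.sum_range_succ]; push_cast; push_cast at ih; linear_combination ih

lemma exponent_identity {m k d : ℕ} (r : ℤ) (hk : k ≤ m) :
    ((m : ℤ) * ((d : ℤ) * m - d + 2 * r) / 2 + ((d : ℤ) - r) * k)
      + (d : ℤ) * (∑ j ∈ range (m - k), ((m : ℤ) - (j : ℤ)))
      - (d : ℤ) * (∑ j ∈ range k, ((m : ℤ) - (j : ℤ)))
      = ((m - k : ℕ) : ℤ) * ((d : ℤ) * m + r) := by
  have hev : (2 : ℤ) ∣ (m : ℤ) * ((d : ℤ) * m - d + 2 * r) := by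
    obtain ⟨c, hc⟩ := Int.even_mul_succ_self ((m : ℤ) - 1)
    exact ⟨(d : ℤ) * c + (m : ℤ) * r, by linear_combination (d : ℤ) * hc⟩
  have e2 := Int.mul_ediv_cancel' hev
  have g1 := sum_lin (m : ℤ) (m - k)
  have g2 := sum_lin (m : ℤ) k
  have hu : ((m - k : ℕ) : ℤ) = (m : ℤ) - (k : ℤ) := by push_cast [hk]; ring
  rw [hu] at g1 ⊢
  apply mul_left_cancel₀ (by norm_num : (2 : ℤ) ≠ 0)
  linear_combination e2 + (d : ℤ) * g1 - (d : ℤ) * g2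

/-! ### Factor and product congruences -/

lemma a_mul_Cinv : a * RatFunc.C ((RatFunc.X : K)⁻¹) = 1 := by
  rw [a_eq, ← map_mul, mul_inv_cancel₀ (RatFunc.X_ne_zero), map_one]

lemma nice_g (d m j : ℕ) : Nice (1 - RatFunc.C ((RatFunc.X : K)⁻¹) * q ^ (d * (m - j))) :=
  nice_one.sub ((nice_C _).mul (nice_q_npow _))

lemma factor_cong {m n d : ℕ} (r : ℤ) (hdvd : (n : ℤ) ∣ ((d : ℤ) * m + r)) {j : ℕ}
    (hj : j < m) :
    Cong n (1 - (a * q ^ r) * (q ^ d) ^ j)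
      ((-a) * q ^ (-((d : ℤ) * ((m : ℤ) - j))) *
        (1 - RatFunc.C ((RatFunc.X : K)⁻¹) * q ^ (d * (m - j)))) := by
  set W : ℤ := (d : ℤ) * ((m : ℤ) - j) with hW
  have hw : ((d * (m - j) : ℕ) : ℤ) = W := by rw [hW]; push_cast [hj.le]; ring
  have hlhs : (a * q ^ r) * (q ^ d) ^ j = a * q ^ (r + ((d * j : ℕ) : ℤ)) := by
    rw [← pow_mul, ← zpow_natCast q (d * j), mul_assoc, ← zpow_add₀ q_ne_zero]
  have hql : q ^ (-W) * q ^ ((d * (m - j) : ℕ) : ℤ) = 1 := by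
    rw [← zpow_add₀ q_ne_zero, hw, neg_add_cancel, zpow_zero]
  have hrhs : (-a) * q ^ (-W) * (1 - RatFunc.C ((RatFunc.X : K)⁻¹) * q ^ (d * (m - j)))
      = 1 - a * q ^ (-W) := by
    rw [← zpow_natCast q (d * (m - j))]
    linear_combination (a * RatFunc.C ((RatFunc.X : K)⁻¹)) * hql + a_mul_Cinv
  have hz : (n : ℤ) ∣ (r + ((d * j : ℕ) : ℤ)) - (-W) := by
    have he : (r + ((d * j : ℕ) : ℤ)) - (-W) = (d : ℤ) * m + r := by rw [hW]; push_cast; ring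
    rw [he]; exact hdvd
  refine (((cong_q_zpow hz).mul_left a nice_a).one_sub).congr ?_ ?_
  · rw [hlhs]
  · rw [hrhs]

lemma prod_cong {m n d : ℕ} (r : ℤ) (hdvd : (n : ℤ) ∣ ((d : ℤ) * m + r)) {t : ℕ}
    (ht : t ≤ m) :
    Cong n (qPoch (a * q ^ r) (q ^ d) t)
      ((-a) ^ t * q ^ (-((d : ℤ) * ∑ j ∈ range t, ((m : ℤ) - j))) *
        ∏ j ∈ range t, (1 - RatFunc.C ((RatFunc.X : K)⁻¹) * q ^ (d * (m - j)))) := by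
  induction t with
  | zero => simpa [qPoch] using Cong.refl n 1
  | succ s ih =>
    have hs : s ≤ m := by omega
    have hsm : s < m := by omega
    have hQ : qPoch (a * q ^ r) (q ^ d) (s + 1)
        = qPoch (a * q ^ r) (q ^ d) s * (1 - (a * q ^ r) * (q ^ d) ^ s) := by
      rw [qPoch, qPoch, Finset.prod_range_succ]
    have hre : (-a) ^ (s + 1) * q ^ (-((d : ℤ) * ∑ j ∈ range (s + 1), ((m : ℤ) - j))) *
          ∏ j ∈ range (s + 1), (1 - RatFunc.C ((RatFunc.X : K)⁻¹) * q ^ (d * (m - j)))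
        = ((-a) ^ s * q ^ (-((d : ℤ) * ∑ j ∈ range s, ((m : ℤ) - j))) *
            ∏ j ∈ range s, (1 - RatFunc.C ((RatFunc.X : K)⁻¹) * q ^ (d * (m - j)))) *
          ((-a) * q ^ (-((d : ℤ) * ((m : ℤ) - s))) *
            (1 - RatFunc.C ((RatFunc.X : K)⁻¹) * q ^ (d * (m - s)))) := by
      rw [Finset.prod_range_succ, Finset.sum_range_succ, pow_succ, mul_add, neg_add,
        zpow_add₀ q_ne_zero]
      ring
    have hnf : Nice (1 - (a * q ^ r) * (q ^ d) ^ s) :=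
      nice_one.sub ((nice_a.mul (nice_q_zpow r)).mul ((nice_q_npow d).pow s))
    have hny : Nice ((-a) ^ s * q ^ (-((d : ℤ) * ∑ j ∈ range s, ((m : ℤ) - j))) *
          ∏ j ∈ range s, (1 - RatFunc.C ((RatFunc.X : K)⁻¹) * q ^ (d * (m - j)))) :=
      ((nice_a.neg.pow s).mul (nice_q_zpow _)).mul (Nice.prod fun i _ => nice_g d m i)
    exact (((ih hs).mul (factor_cong r hdvd hsm) hnf hny)).congr hQ.symm hre.symm

/-! ### The denominators as polynomials -/

lemma B_eq (d t : ℕ) : qPoch (q ^ d / a) (q ^ d) t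
    = ∏ i ∈ range t, (1 - RatFunc.C ((RatFunc.X : K)⁻¹) * q ^ (d * (i + 1))) := by
  rw [qPoch]
  refine Finset.prod_congr rfl fun i _ => ?_
  rw [div_eq_mul_inv, a_eq, ← map_inv₀, ← pow_mul,
    show d * (i + 1) = d + d * i by ring, pow_add]
  ring

lemma B_poly (d t : ℕ) : qPoch (q ^ d / a) (q ^ d) t
    = ι (∏ i ∈ range t, (1 - Polynomial.C ((RatFunc.X : K)⁻¹) * X ^ (d * (i + 1)))) := by
  rw [B_eq, map_prod]
  refine Finset.prod_congr rfl fun i _ => ?_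
  rw [map_sub, map_one, map_mul, ι_C, ι_X_pow]

lemma factor_poly_ne (e : ℕ) (he : 0 < e) :
    (1 - Polynomial.C ((RatFunc.X : K)⁻¹) * X ^ e : Polynomial K) ≠ 0 := by
  intro h
  have := congrArg (fun p => Polynomial.coeff p 0) h
  simp only [Polynomial.coeff_sub, Polynomial.coeff_one, Polynomial.coeff_C_mul,
    Polynomial.coeff_X_pow, if_neg (by omega : ¬ (0 = e)), mul_zero, sub_zero] at this
  exact one_ne_zero this

lemma D_ne_zero (d t : ℕ) (hd : 0 < d) :
    (∏ i ∈ range t, (1 - Polynomial.C ((RatFunc.X : K)⁻¹) * X ^ (d * (i + 1))) :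
      Polynomial K) ≠ 0 :=
  Finset.prod_ne_zero_iff.mpr fun i _ => factor_poly_ne _ (by positivity)

lemma shuffle (d m k : ℕ) (hk : k ≤ m) :
    (∏ j ∈ range (m - k), (1 - RatFunc.C ((RatFunc.X : K)⁻¹) * q ^ (d * (m - j)))) *
      ∏ i ∈ range k, (1 - RatFunc.C ((RatFunc.X : K)⁻¹) * q ^ (d * (i + 1)))
    = ∏ i ∈ range m, (1 - RatFunc.C ((RatFunc.X : K)⁻¹) * q ^ (d * (i + 1))) := by
  have h1 : ∏ j ∈ range (m - k), (1 - RatFunc.C ((RatFunc.X : K)⁻¹) * q ^ (d * (m - j)))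
      = ∏ j ∈ range (m - k), (1 - RatFunc.C ((RatFunc.X : K)⁻¹) * q ^ (d * (k + j + 1))) := by
    rw [← Finset.prod_range_reflect (fun j => (1 - RatFunc.C ((RatFunc.X : K)⁻¹) *
      q ^ (d * (m - j)))) (m - k)]
    refine Finset.prod_congr rfl fun j hj => ?_
    rw [Finset.mem_range] at hj
    rw [show m - (m - k - 1 - j) = k + j + 1 from by omega]
  have h2 := Finset.prod_range_add
    (fun i => (1 - RatFunc.C ((RatFunc.X : K)⁻¹) * q ^ (d * (i + 1)))) k (m - k)
  rw [show k + (m - k) = m from by omega] at h2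
  rw [h1, h2]
  ring

end GS
namespace GS
lemma ι_inj : Function.Injective ι := RatFunc.algebraMap_injective K
end GS

open GS

/-- Lemma 2.1 (Guo–Schlosser). -/
theorem stmt_5 (m n d : ℕ) (hm : 0 < m) (hnpos : 0 < n) (hd : 0 < d) (hmn : m ≤ n - 1)
    (r : ℤ) (hr : (d : ℤ) * m ≡ -r [ZMOD (n : ℤ)]) (k : ℕ) (hk : k ≤ m) :
    (cyclotomic n K) ∣
      (qPoch (a * q ^ r) (q ^ d) (m - k) / qPoch (q ^ d / a) (q ^ d) (m - k) -
        (-a) ^ ((m : ℤ) - 2 * k) * (qPoch (a * q ^ r) (q ^ d) k / qPoch (q ^ d / a) (q ^ d) k) *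
          q ^ ((m : ℤ) * ((d : ℤ) * m - d + 2 * r) / 2 + ((d : ℤ) - r) * k)).num := by
  classical
  have hdvd : (n : ℤ) ∣ ((d : ℤ) * m + r) := by
    have h := Int.ModEq.dvd hr
    rw [show (d : ℤ) * m + r = -(-r - (d : ℤ) * m) from by ring]
    exact dvd_neg.mpr h
  have h1 := GS.prod_cong (m := m) (n := n) (d := d) r hdvd (Nat.sub_le m k)
  have h2 := GS.prod_cong (m := m) (n := n) (d := d) r hdvd hk
  have hid := GS.exponent_identity (m := m) (k := k) (d := d) r hk
  have hsh1 := GS.shuffle d m k hk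
  have hsh2 := GS.shuffle d m (m - k) (Nat.sub_le m k)
  rw [show m - (m - k) = k from by omega] at hsh2
  set E : ℤ := (m : ℤ) * ((d : ℤ) * m - d + 2 * r) / 2 + ((d : ℤ) - r) * k with hE
  set μ : ℤ := (m : ℤ) - 2 * k with hμ
  set A₁ := qPoch (a * q ^ r) (q ^ d) (m - k) with hA₁
  set A₂ := qPoch (a * q ^ r) (q ^ d) k with hA₂
  set B₁F := qPoch (q ^ d / a) (q ^ d) (m - k) with hB₁F
  set B₂F := qPoch (q ^ d / a) (q ^ d) k with hB₂F
  set W₁ : ℤ := (d : ℤ) * ∑ j ∈ range (m - k), ((m : ℤ) - j) with hW₁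
  set W₂ : ℤ := (d : ℤ) * ∑ j ∈ range k, ((m : ℤ) - j) with hW₂
  set P₁ := ∏ j ∈ range (m - k),
    (1 - RatFunc.C ((RatFunc.X : K)⁻¹) * q ^ (d * (m - j))) with hP₁
  set P₂ := ∏ j ∈ range k,
    (1 - RatFunc.C ((RatFunc.X : K)⁻¹) * q ^ (d * (m - j))) with hP₂
  set C₁ := ∏ i ∈ range (m - k),
    (1 - RatFunc.C ((RatFunc.X : K)⁻¹) * q ^ (d * (i + 1))) with hC₁
  set C₂ := ∏ i ∈ range k,
    (1 - RatFunc.C ((RatFunc.X : K)⁻¹) * q ^ (d * (i + 1))) with hC₂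
  -- h1 : Cong n A₁ ((-a) ^ (m-k) * q ^ (-W₁) * P₁)
  -- h2 : Cong n A₂ ((-a) ^ k * q ^ (-W₂) * P₂)
  have hb1 : B₁F = C₁ := by rw [hB₁F, hC₁]; exact GS.B_eq d (m - k)
  have hb2 : B₂F = C₂ := by rw [hB₂F, hC₂]; exact GS.B_eq d k
  have hshuf : P₁ * C₂ = P₂ * C₁ := hsh1.trans hsh2.symm
  have hnC : ∀ t : ℕ, Nice (∏ i ∈ range t,
      (1 - RatFunc.C ((RatFunc.X : K)⁻¹) * q ^ (d * (i + 1)))) := fun t =>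
    Nice.prod fun i _ => nice_one.sub ((nice_C _).mul (nice_q_npow _))
  have hnB1 : Nice B₁F := by rw [hb1, hC₁]; exact hnC _
  have hnB2 : Nice B₂F := by rw [hb2, hC₂]; exact hnC _
  have hnP₁ : Nice P₁ := by rw [hP₁]; exact Nice.prod fun i _ => GS.nice_g d m i
  have hnP₂ : Nice P₂ := by rw [hP₂]; exact Nice.prod fun i _ => GS.nice_g d m i
  have hcongr_q : Cong n (q ^ (-W₁)) (q ^ (E - W₂)) := by
    apply cong_q_zpow
    rw [show -W₁ - (E - W₂) = -(E + W₁ - W₂) from by ring, hid]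
    exact dvd_neg.mpr (hdvd.mul_left _)
  have hstep1 : Cong n (A₁ * B₂F) (((-a) ^ (m - k) * q ^ (-W₁) * P₁) * B₂F) :=
    h1.mul (Cong.refl n B₂F) hnB2
      (((nice_a.neg.pow _).mul (nice_q_zpow _)).mul hnP₁)
  have hstep2 : Cong n (((-a) ^ (m - k) * q ^ (-W₁) * P₁) * B₂F)
      (((-a) ^ μ * q ^ E) * (((-a) ^ k * q ^ (-W₂) * P₂) * B₁F)) := by
    have hc := hcongr_q.mul_left ((-a) ^ (m - k) * (P₁ * B₂F))
      ((nice_a.neg.pow _).mul (hnP₁.mul hnB2))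
    refine hc.congr (by ring) ?_
    have hsplitA : ((-a) : F) ^ (m - k) = (-a) ^ μ * (-a) ^ k := by
      rw [← zpow_natCast (-a) (m - k), ← zpow_natCast (-a) k, ← zpow_add₀ GS.neg_a_ne_zero]
      congr 1
      rw [hμ]
      push_cast [Nat.cast_sub hk]
      ring
    have hsplitq : q ^ (E - W₂) = q ^ E * q ^ (-W₂) := by
      rw [← zpow_add₀ GS.q_ne_zero, sub_eq_add_neg]
    rw [hsplitq, hsplitA, hb1, hb2]
    linear_combination ((-a) ^ μ * (-a) ^ k * q ^ E * q ^ (-W₂)) * hshuf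
  have hstep3 : Cong n (((-a) ^ μ * q ^ E) * (((-a) ^ k * q ^ (-W₂) * P₂) * B₁F))
      (((-a) ^ μ * q ^ E) * (A₂ * B₁F)) := by
    have hc := (h2.symm).mul_left (((-a) ^ μ * q ^ E) * B₁F)
      (((nice_neg_a_zpow μ).mul (nice_q_zpow E)).mul hnB1)
    exact hc.congr (by ring) (by ring)
  have hBig : Cong n (A₁ * B₂F) (((-a) ^ μ * q ^ E) * (A₂ * B₁F)) :=
    hstep1.trans (hstep2.trans hstep3)
  obtain ⟨z, ⟨p, t, hpt⟩, hz⟩ := hBig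
  set D₁ : Polynomial K := ∏ i ∈ range (m - k),
    (1 - Polynomial.C ((RatFunc.X : K)⁻¹) * X ^ (d * (i + 1))) with hD₁
  set D₂ : Polynomial K := ∏ i ∈ range k,
    (1 - Polynomial.C ((RatFunc.X : K)⁻¹) * X ^ (d * (i + 1))) with hD₂
  have hb1p : B₁F = GS.ι D₁ := by rw [hB₁F, hD₁]; exact GS.B_poly d (m - k)
  have hb2p : B₂F = GS.ι D₂ := by rw [hB₂F, hD₂]; exact GS.B_poly d k
  have hD₁ne : D₁ ≠ 0 := by rw [hD₁]; exact GS.D_ne_zero d _ hd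
  have hD₂ne : D₂ ≠ 0 := by rw [hD₂]; exact GS.D_ne_zero d _ hd
  have hB1ne : B₁F ≠ 0 := by
    rw [hb1p]; exact (map_ne_zero_iff _ GS.ι_inj).mpr hD₁ne
  have hB2ne : B₂F ≠ 0 := by
    rw [hb2p]; exact (map_ne_zero_iff _ GS.ι_inj).mpr hD₂ne
  set G : F := A₁ / B₁F - (-a) ^ μ * (A₂ / B₂F) * q ^ E with hG
  have hexp : G * (B₁F * B₂F) = A₁ * B₂F - ((-a) ^ μ * q ^ E) * (A₂ * B₁F) := by
    rw [hG]
    field_simp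
  have hGmul : G * GS.ι (X ^ t * (D₁ * D₂)) = GS.ι (cyclotomic n K * p) := by
    rw [map_mul, map_mul, GS.ι_X_pow, ← hb1p, ← hb2p]
    calc G * (q ^ t * (B₁F * B₂F)) = (G * (B₁F * B₂F)) * q ^ t := by ring
    _ = (GS.ι (cyclotomic n K) * z) * q ^ t := by rw [hexp, hz]
    _ = GS.ι (cyclotomic n K) * (z * q ^ t) := by ring
    _ = GS.ι (cyclotomic n K) * GS.ι p := by rw [hpt]
    _ = GS.ι (cyclotomic n K * p) := by rw [map_mul]
  have hdenne : GS.ι G.denom ≠ 0 :=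
    (map_ne_zero_iff _ GS.ι_inj).mpr (RatFunc.denom_ne_zero G)
  have hnum' : GS.ι G.num = G * GS.ι G.denom := by
    have hnd : GS.ι G.num / GS.ι G.denom = G := RatFunc.num_div_denom G
    field_simp at hnd
    exact hnd.trans (mul_comm _ _)
  have hnum : G.num * (X ^ t * (D₁ * D₂)) = (cyclotomic n K * p) * G.denom := by
    apply GS.ι_inj
    rw [map_mul GS.ι (RatFunc.num G) _, hnum',
      map_mul GS.ι (cyclotomic n K * p) (RatFunc.denom G), mul_right_comm, hGmul]
  have hdvd2 : cyclotomic n K ∣ G.num * (X ^ t * (D₁ * D₂)) :=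
    ⟨p * G.denom, by rw [hnum]; ring⟩
  have hcop : IsCoprime (cyclotomic n K) (X ^ t * (D₁ * D₂)) := by
    refine ((GS.coprime_cyclo_X hnpos).pow_right).mul_right ?_
    rw [hD₁, hD₂]
    exact (IsCoprime.prod_right fun i _ =>
        GS.coprime_cyclo_factor hnpos (by positivity)).mul_right
      (IsCoprime.prod_right fun i _ => GS.coprime_cyclo_factor hnpos (by positivity))
  exact hcop.dvd_of_dvd_mul_right hdvd2
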